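/- arXiv:0909.5677 — 4 statements merged into one kernel-verified Lean document; each statement's English description precedes it below -/
import Mathlib

section
/- In the s-CA setting, suppose the truthful single-minded declaration profile d is separated, and let d' = (d_i', d_{-i}) be obtained by changing only agent i's declaration, where either d_i' = d_i, or d_i' is a truthful single-minded declaration (S_i', t_i(S_i')) with |S_i'| ≤ s satisfying u_i(d_i', d_{-i}) > u_i(d_i, d_{-i}). Then d' is separated. -/
open Finset

variable {α : Type*} [DecidableEq α] [Fintype α] {n : ℕ}

/-- A valuation: nonnegative, monotone and normalized. -/
def IsValuation (t : Finset α → ℝ) : Prop :=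
  (∀ S, 0 ≤ t S) ∧ (∀ S T : Finset α, S ⊆ T → t S ≤ t T) ∧ t ∅ = 0

/-- The single-minded declaration for the set `S` at value `x`: it assigns `x` to every
superset of `S` (when `S` is nonempty) and `0` to every other set. -/
def singleMinded (S : Finset α) (x : ℝ) : Finset α → ℝ :=
  fun T => if S ⊆ T ∧ S.Nonempty then x else 0

/-- The greedy order on agents: decreasing declared value, ties broken by agent index. -/
noncomputable def greedyOrder (n : ℕ) (v : Fin n → ℝ) : List (Fin n) :=
  (List.finRange n).mergeSort fun i j => decide (v j < v i ∨ (v i = v j ∧ i ≤ j))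

/-- One pass of the greedy algorithm over a list of agents, keeping track of the
set `used` of already-allocated objects; accepts an agent if its demanded set is nonempty,
its value positive, and its demanded set disjoint from `used`. -/
noncomputable def greedyStep (S : Fin n → Finset α) (v : Fin n → ℝ) :
    List (Fin n) → Finset α → Finset (Fin n)
  | [], _ => ∅
  | i :: rest, used =>
    if (S i).Nonempty ∧ 0 < v i ∧ Disjoint (S i) used then
      insert i (greedyStep S v rest (used ∪ S i))
    else greedyStep S v rest used

/-- The set of agents tentatively accepted by the greedy algorithm `A_sCA` on the
single-minded profile with demanded sets `S` and values `v`. -/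
noncomputable def greedyWinners (S : Fin n → Finset α) (v : Fin n → ℝ) : Finset (Fin n) :=
  greedyStep S v (greedyOrder n v) ∅

/-- The set of agents finally allocated by the mechanism `M_sCA`: tentatively accepted agents
whose declared value exceeds the total declared value of all intersecting bids. -/
noncomputable def mechWinners (S : Fin n → Finset α) (v : Fin n → ℝ) : Finset (Fin n) :=
  (greedyWinners S v).filter fun i =>
    (∑ j ∈ univ.filter fun j => j ≠ i ∧ (S j ∩ S i).Nonempty, v j) < v i

/-- The allocation produced by the mechanism `M_sCA`. -/
noncomputable def mechAlloc (S : Fin n → Finset α) (v : Fin n → ℝ) (i : Fin n) : Finset α :=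
  if i ∈ mechWinners S v then S i else ∅

/-- `R_i(d, T)`: the agents other than `i` whose demanded set intersects `T`. -/
def Rset (S : Fin n → Finset α) (i : Fin n) (T : Finset α) : Finset (Fin n) :=
  univ.filter fun j => j ≠ i ∧ (S j ∩ T).Nonempty

/-- The declared values of the truthful single-minded profile with demanded sets `S`
for agents of types `t`. -/
def tv (t : Fin n → Finset α → ℝ) (S : Fin n → Finset α) : Fin n → ℝ :=
  fun i => t i (S i)

/-- The truthful single-minded profile (with types `t` and demanded sets `S`)
is separated for agent `i`. -/
def SeparatedFor (t : Fin n → Finset α → ℝ) (S : Fin n → Finset α) (i : Fin n) : Prop :=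
  ∑ j ∈ (Rset S i (S i)).filter (fun j => t j (S j) < t i (S i)), t j (S j) ≤ t i (S i)

/-- The truthful single-minded profile is separated. -/
def Separated (t : Fin n → Finset α → ℝ) (S : Fin n → Finset α) : Prop :=
  ∀ i, SeparatedFor t S i

/-- The critical price of the set `T` for agent `i` in `M_sCA`, against the declarations of
the other agents in the profile `(S, v)`. -/
noncomputable def critPrice (S : Fin n → Finset α) (v : Fin n → ℝ)
    (i : Fin n) (T : Finset α) : ℝ :=
  sInf {x : ℝ | 0 ≤ x ∧ i ∈ mechWinners (Function.update S i T) (Function.update v i x)}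

/-- The utility of agent `i`, with true valuation `ti`, in `M_sCA` on the single-minded
profile `(S, v)`. -/
noncomputable def utility (ti : Finset α → ℝ) (S : Fin n → Finset α) (v : Fin n → ℝ)
    (i : Fin n) : ℝ :=
  if i ∈ mechWinners S v then ti (S i) - critPrice S v i (S i) else 0

/-- Claim inside Lemma 4.2: in the s-CA setting, a (strictly improving) truthful
single-minded best-response step by a single agent preserves separation. -/
theorem stmt7 (s : ℕ) (hs : 1 ≤ s)
    (t : Fin n → Finset α → ℝ) (ht : ∀ i, IsValuation (t i))
    (S : Fin n → Finset α) (hScard : ∀ i, (S i).card ≤ s)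
    (hsep : Separated t S)
    (i : Fin n) (S' : Finset α) (hS'card : S'.card ≤ s)
    (hstep : S' = S i ∨
      utility (t i) (Function.update S i S') (tv t (Function.update S i S')) i >
        utility (t i) S (tv t S) i) :
    Separated t (Function.update S i S') := by
  rcases hstep with h | h
  · subst h
    simpa [Function.update_eq_self] using hsep
  · set S'' := Function.update S i S' with hS''
    have hnn : ∀ j (T : Finset α), 0 ≤ t j T := fun j T => (ht j).1 T
    -- the old utility is nonnegative
    have hold : 0 ≤ utility (t i) S (tv t S) i := by
      unfold utility
      split_ifs with hw
      · have hcp : critPrice S (tv t S) i (S i) ≤ t i (S i) := by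
          apply csInf_le ⟨0, fun x hx => hx.1⟩
          refine ⟨hnn i (S i), ?_⟩
          rw [Function.update_eq_self]
          rw [show t i (S i) = tv t S i from rfl, Function.update_eq_self]
          exact hw
        linarith
      · exact le_rfl
    have hpos : 0 < utility (t i) S'' (tv t S'') i := lt_of_le_of_lt hold h
    have hwin : i ∈ mechWinners S'' (tv t S'') := by
      by_contra hc
      unfold utility at hpos
      rw [if_neg hc] at hpos
      exact lt_irrefl _ hpos
    have key := (Finset.mem_filter.mp hwin).2
    have hSi : S'' i = S' := Function.update_self i S' S
    have hSj : ∀ j, j ≠ i → S'' j = S j := fun j hj => Function.update_of_ne hj S' S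
    have key2 : ∀ j, j ≠ i → (S j ∩ S').Nonempty → t j (S j) < t i S' := by
      intro j hj hint
      have hmem : j ∈ univ.filter (fun j => j ≠ i ∧ (S'' j ∩ S'' i).Nonempty) := by
        simp only [Finset.mem_filter, Finset.mem_univ, true_and]
        rw [hSi, hSj j hj]
        exact ⟨hj, hint⟩
      have h1 : tv t S'' j ≤ ∑ k ∈ univ.filter (fun k => k ≠ i ∧ (S'' k ∩ S'' i).Nonempty),
          tv t S'' k := Finset.single_le_sum (fun k _ => hnn k (S'' k)) hmem
      have h2 : tv t S'' j = t j (S j) := by simp [tv, hSj j hj]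
      have h3 : tv t S'' i = t i S' := by simp [tv, hSi]
      rw [h2] at h1
      rw [h3] at key
      linarith
    intro k
    by_cases hk : k = i
    · subst hk
      unfold SeparatedFor
      have h1 : ∑ j ∈ (Rset S'' k (S'' k)).filter (fun j => t j (S'' j) < t k (S'' k)),
          t j (S'' j) ≤ ∑ j ∈ Rset S'' k (S'' k), t j (S'' j) :=
        Finset.sum_le_sum_of_subset_of_nonneg (Finset.filter_subset _ _)
          (fun j _ _ => hnn j _)
      have h2 : ∑ j ∈ Rset S'' k (S'' k), t j (S'' j)
          = ∑ j ∈ univ.filter (fun j => j ≠ k ∧ (S'' j ∩ S'' k).Nonempty), tv t S'' j := rfl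
      have h3 : tv t S'' k = t k (S'' k) := rfl
      rw [h3] at key
      refine le_of_lt ?_
      calc ∑ j ∈ (Rset S'' k (S'' k)).filter (fun j => t j (S'' j) < t k (S'' k)),
            t j (S'' j) ≤ ∑ j ∈ Rset S'' k (S'' k), t j (S'' j) := h1
        _ < t k (S'' k) := by rw [h2]; exact key
    · unfold SeparatedFor
      have hni : ∀ j ∈ (Rset S'' k (S'' k)).filter (fun j => t j (S'' j) < t k (S'' k)),
          j ≠ i := by
        intro j hj
        rintro rfl
        simp only [Rset, Finset.mem_filter, Finset.mem_univ, true_and] at hj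
        obtain ⟨⟨hjk, hint⟩, hlt⟩ := hj
        rw [hSi, hSj k hk] at hint
        rw [hSi, hSj k hk] at hlt
        have : (S k ∩ S').Nonempty := by rwa [Finset.inter_comm]
        have := key2 k hk this
        linarith
      have hQsub : (Rset S'' k (S'' k)).filter (fun j => t j (S'' j) < t k (S'' k)) ⊆
          (Rset S k (S k)).filter (fun j => t j (S j) < t k (S k)) := by
        intro j hj
        have hji : j ≠ i := hni j hj
        simp only [Rset, Finset.mem_filter, Finset.mem_univ, true_and] at hj ⊢
        obtain ⟨⟨hjk, hint⟩, hlt⟩ := hj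
        rw [hSj j hji, hSj k hk] at hint hlt
        exact ⟨⟨hjk, hint⟩, hlt⟩
      have hcong : ∑ j ∈ (Rset S'' k (S'' k)).filter (fun j => t j (S'' j) < t k (S'' k)),
          t j (S'' j)
          = ∑ j ∈ (Rset S'' k (S'' k)).filter (fun j => t j (S'' j) < t k (S'' k)),
          t j (S j) :=
        Finset.sum_congr rfl (fun j hj => by rw [hSj j (hni j hj)])
      calc ∑ j ∈ (Rset S'' k (S'' k)).filter (fun j => t j (S'' j) < t k (S'' k)),
            t j (S'' j)
          = ∑ j ∈ (Rset S'' k (S'' k)).filter (fun j => t j (S'' j) < t k (S'' k)),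
            t j (S j) := hcong
        _ ≤ ∑ j ∈ (Rset S k (S k)).filter (fun j => t j (S j) < t k (S k)), t j (S j) :=
            Finset.sum_le_sum_of_subset_of_nonneg hQsub (fun j _ _ => hnn j _)
        _ ≤ t k (S k) := hsep k
        _ = t k (S'' k) := by rw [hSj k hk]
end

section
/- In the s-CA setting, let A ⊆ M be a nonempty set with |A| ≤ s, and suppose the truthful single-minded declaration profile d is separated and satisfies ∑_{j ∈ R_i(d,A)} d_j(S_j) < (1/2)·t_i(A). Then every truthful single-minded declaration d_i* = (S*, t_i(S*)) with |S*| ≤ s that maximizes agent i's utility u_i(·, d_{-i}) over all such declarations satisfies t_i(S*) ≥ (1/2)·t_i(A). -/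
open Finset

variable {α : Type*} [DecidableEq α] [Fintype α] {n : ℕ}

section Aux

variable {α : Type*} [DecidableEq α] [Fintype α] {n : ℕ}

private lemma greedy_mem_of (S : Fin n → Finset α) (v : Fin n → ℝ) (i : Fin n)
    (hne : (S i).Nonempty) (hpos : 0 < v i)
    (hdom : ∀ j, j ≠ i → ((S j) ∩ (S i)).Nonempty → v j < v i) :
    ∀ (l : List (Fin n)) (used : Finset α),
      l.Pairwise (fun a b => decide (v b < v a ∨ (v a = v b ∧ a ≤ b)) = true) →
      i ∈ l → Disjoint (S i) used → i ∈ greedyStep S v l used := by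
  intro l
  induction l with
  | nil => intro used _ hi _; simp at hi
  | cons a rest ih =>
    intro used hl hi hd
    rw [List.pairwise_cons] at hl
    by_cases hai : a = i
    · subst hai
      simp only [greedyStep]
      rw [if_pos ⟨hne, hpos, hd⟩]
      exact Finset.mem_insert_self _ _
    · have hi' : i ∈ rest := by
        rcases List.mem_cons.mp hi with h | h
        · exact absurd h.symm hai
        · exact h
      have hdisj : Disjoint (S a) (S i) := by
        by_contra hnd
        have hint : ((S a) ∩ (S i)).Nonempty :=
          Finset.not_disjoint_iff_nonempty_inter.mp hnd
        have h1 := hdom a hai hint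
        have h2 := hl.1 i hi'
        simp only [decide_eq_true_eq] at h2
        rcases h2 with h | ⟨h, _⟩ <;> linarith
      simp only [greedyStep]
      by_cases hc : (S a).Nonempty ∧ 0 < v a ∧ Disjoint (S a) used
      · rw [if_pos hc]
        refine Finset.mem_insert_of_mem (ih _ hl.2 hi' ?_)
        rw [Finset.disjoint_union_right]
        exact ⟨hd, hdisj.symm⟩
      · rw [if_neg hc]
        exact ih _ hl.2 hi' hd

private lemma mech_win (S : Fin n → Finset α) (v : Fin n → ℝ) (i : Fin n)
    (hne : (S i).Nonempty)
    (hnonneg : ∀ j, 0 ≤ v j)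
    (hlt : ∑ j ∈ Rset S i (S i), v j < v i) :
    i ∈ mechWinners S v := by
  have hsum0 : 0 ≤ ∑ j ∈ Rset S i (S i), v j :=
    Finset.sum_nonneg fun j _ => hnonneg j
  have hpos : 0 < v i := lt_of_le_of_lt hsum0 hlt
  have hdom : ∀ j, j ≠ i → ((S j) ∩ (S i)).Nonempty → v j < v i := by
    intro j hj hint
    refine lt_of_le_of_lt ?_ hlt
    exact Finset.single_le_sum (fun k _ => hnonneg k)
      (by simp [Rset, hj, hint])
  have hg : i ∈ greedyWinners S v := by
    apply greedy_mem_of S v i hne hpos hdom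
    · apply List.pairwise_mergeSort
      · intro a b c hab hbc
        simp only [decide_eq_true_eq] at *
        rcases hab with h1 | ⟨h1, h1'⟩ <;> rcases hbc with h2 | ⟨h2, h2'⟩
        · left; linarith
        · left; linarith
        · left; linarith
        · right; exact ⟨h1.trans h2, h1'.trans h2'⟩
      · intro a b
        simp only [Bool.or_eq_true, decide_eq_true_eq]
        rcases lt_trichotomy (v a) (v b) with h | h | h
        · right; left; exact h
        · rcases le_total a b with h' | h'
          · left; right; exact ⟨h, h'⟩
          · right; right; exact ⟨h.symm, h'⟩
        · left; left; exact h
    · simp [greedyOrder, List.mem_mergeSort]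
    · exact Finset.disjoint_empty_right _
  rw [mechWinners, Finset.mem_filter]
  exact ⟨hg, hlt⟩

end Aux

/-- Proposition 4.4: if the separated profile satisfies
`∑_{j ∈ R_i(d,A)} d_j(S_j) < t_i(A)/2`, then any truthful single-minded declaration
(for a set of size at most `s`) maximizing agent `i`'s utility is for a set worth at
least `t_i(A)/2`. -/

theorem stmt9 (s : ℕ) (hs : 1 ≤ s)
    (t : Fin n → Finset α → ℝ) (ht : ∀ i, IsValuation (t i))
    (S : Fin n → Finset α) (hScard : ∀ i, (S i).card ≤ s)
    (hsep : Separated t S)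
    (i : Fin n) (A : Finset α) (hA : A.Nonempty) (hAcard : A.card ≤ s)
    (hsmall : ∑ j ∈ Rset S i A, t j (S j) < (1 / 2) * t i A)
    (Sstar : Finset α) (hstar : Sstar.card ≤ s)
    (hmax : ∀ S'' : Finset α, S''.card ≤ s →
      utility (t i) (Function.update S i S'') (tv t (Function.update S i S'')) i ≤
        utility (t i) (Function.update S i Sstar) (tv t (Function.update S i Sstar)) i) :
    t i Sstar ≥ (1 / 2) * t i A := by
  classical
  set S' := Function.update S i A with hS'
  set v' := tv t S' with hv'
  have hS'i : S' i = A := Function.update_self i A S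
  have hS'j : ∀ j, j ≠ i → S' j = S j := fun j hj => Function.update_of_ne hj A S
  set B := ∑ j ∈ Rset S i A, t j (S j) with hBdef
  have hB0 : 0 ≤ B := Finset.sum_nonneg fun j _ => (ht j).1 _
  have hBhalf : B < (1 / 2) * t i A := hsmall
  have htApos : 0 < t i A := by nlinarith
  have hRset : Rset S' i A = Rset S i A := by
    ext j
    simp only [Rset, Finset.mem_filter, Finset.mem_univ, true_and]
    constructor
    · rintro ⟨hj, hint⟩; rw [hS'j j hj] at hint; exact ⟨hj, hint⟩
    · rintro ⟨hj, hint⟩; rw [← hS'j j hj] at hint; exact ⟨hj, hint⟩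
  -- any bid x > B on A wins
  have hwin : ∀ x : ℝ, B < x → i ∈ mechWinners S' (Function.update v' i x) := by
    intro x hx
    apply mech_win
    · rw [hS'i]; exact hA
    · intro j
      by_cases hj : j = i
      · subst hj; rw [Function.update_self]; linarith
      · rw [Function.update_of_ne hj]; exact (ht j).1 _
    · rw [hS'i, hRset, Function.update_self]
      refine lt_of_le_of_lt (le_of_eq ?_) hx
      apply Finset.sum_congr rfl
      intro j hj
      have hjne : j ≠ i := by
        simp only [Rset, Finset.mem_filter] at hj
        exact hj.2.1
      rw [Function.update_of_ne hjne, hv', tv, hS'j j hjne]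
  have hv'i : v' i = t i A := by rw [hv', tv, hS'i]
  -- i wins with the truthful bid on A
  have hwinA : i ∈ mechWinners S' v' := by
    have : Function.update v' i (t i A) = v' := by
      rw [← hv'i, Function.update_eq_self]
    rw [← this]
    exact hwin (t i A) (by nlinarith)
  -- critical price bound
  have hupdS : Function.update S' i A = S' := by
    rw [hS', Function.update_idem]
  have hcrit : critPrice S' v' i A ≤ B := by
    rw [critPrice, hupdS]
    have hbdd : BddBelow {x : ℝ | 0 ≤ x ∧ i ∈ mechWinners S' (Function.update v' i x)} :=
      ⟨0, fun x hx => hx.1⟩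
    refine le_of_forall_pos_le_add ?_
    intro ε hε
    exact csInf_le hbdd ⟨by linarith, hwin (B + ε) (by linarith)⟩
  -- critical prices are nonnegative
  have hcrit0 : ∀ (T : Finset α) (S₀ : Fin n → Finset α) (v₀ : Fin n → ℝ),
      0 ≤ critPrice S₀ v₀ i T := by
    intro T S₀ v₀
    exact Real.sInf_nonneg fun x hx => hx.1
  have hutilA : (1 / 2) * t i A < utility (t i) S' v' i := by
    rw [utility, if_pos hwinA, hS'i]
    have := hcrit
    linarith
  have hle := hmax A hAcard
  rw [← hS', ← hv'] at hle
  set S'' := Function.update S i Sstar with hS''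
  set v'' := tv t S'' with hv''
  have hS''i : S'' i = Sstar := Function.update_self i Sstar S
  have hutilS : (1 / 2) * t i A < utility (t i) S'' v'' i := lt_of_lt_of_le hutilA hle
  rw [utility] at hutilS
  by_cases hw : i ∈ mechWinners S'' v''
  · rw [if_pos hw, hS''i] at hutilS
    have := hcrit0 (S'' i) S'' v''
    rw [hS''i] at this
    linarith
  · rw [if_neg hw] at hutilS
    linarith
end

section
/- In the s-CA setting, for every agent i, every nonempty set S ⊆ M with |S| ≤ s, and every profile d_{-i} of truthful single-minded declarations of the other agents (demanding sets of size at most s), the critical price of S in M_sCA equals the total declared value of the intersecting bids: inf{ x ≥ 0 : agent i is allocated S by M_sCA when bidding the single-minded declaration (S, x) against d_{-i} } = ∑_{j ∈ R_i(d, S)} d_j(S_j). -/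
open Finset

variable {α : Type*} [DecidableEq α] [Fintype α] {n : ℕ}

private lemma greedy_mem_aux (S : Fin n → Finset α) (v : Fin n → ℝ) (i : Fin n) :
    ∀ (L : List (Fin n)) (used : Finset α),
      L.Pairwise (fun a b => v b < v a ∨ (v a = v b ∧ a ≤ b)) →
      i ∈ L → (S i).Nonempty → 0 < v i → Disjoint (S i) used →
      (∀ j, j ≠ i → (S j ∩ S i).Nonempty → v j < v i) →
      i ∈ greedyStep S v L used := by
  intro L
  induction L with
  | nil => intro used _ h; simp at h
  | cons a rest ih =>
    intro used hpw hi hne hpos hdisj hlt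
    rw [List.pairwise_cons] at hpw
    obtain ⟨ha, hpw'⟩ := hpw
    by_cases hai : a = i
    · subst hai
      rw [greedyStep, if_pos ⟨hne, hpos, hdisj⟩]
      exact Finset.mem_insert_self _ _
    · have hirest : i ∈ rest := by
        rcases List.mem_cons.mp hi with h | h
        · exact absurd h.symm hai
        · exact h
      have hSdisj : Disjoint (S a) (S i) := by
        by_contra hcon
        rw [Finset.not_disjoint_iff_nonempty_inter] at hcon
        have := hlt a hai hcon
        rcases ha i hirest with h | ⟨h, _⟩ <;> linarith
      rw [greedyStep]
      split_ifs with hcond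
      · exact Finset.mem_insert.mpr (Or.inr (ih (used ∪ S a) hpw' hirest hne hpos
          (Finset.disjoint_union_right.mpr ⟨hdisj, hSdisj.symm⟩) hlt))
      · exact ih used hpw' hirest hne hpos hdisj hlt

/-- The critical price identity used in the proof of Proposition 4.4: in `M_sCA`, the
critical price of a nonempty set `T` of size at most `s` for agent `i`, against truthful
single-minded declarations of the other agents, equals the total declared value of the
intersecting bids. -/
theorem stmt10 (s : ℕ) (hs : 1 ≤ s)
    (t : Fin n → Finset α → ℝ) (ht : ∀ i, IsValuation (t i))
    (S : Fin n → Finset α) (i : Fin n) (hScard : ∀ j, j ≠ i → (S j).card ≤ s)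
    (T : Finset α) (hT : T.Nonempty) (hTcard : T.card ≤ s) :
    critPrice S (tv t S) i T = ∑ j ∈ Rset S i T, t j (S j) := by
  set B : ℝ := ∑ j ∈ Rset S i T, t j (S j) with hB
  have hBnn : 0 ≤ B := Finset.sum_nonneg fun j _ => (ht j).1 (S j)
  -- the sum appearing in the mechanism filter for agent i equals B
  have hsum : ∀ x : ℝ,
      (∑ j ∈ univ.filter fun j => j ≠ i ∧
          ((Function.update S i T j) ∩ (Function.update S i T i)).Nonempty,
        Function.update (tv t S) i x j) = B := by
    intro x
    rw [hB, Rset]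
    apply Finset.sum_congr
    · apply Finset.filter_congr
      intro j _
      by_cases hj : j = i
      · simp [hj]
      · simp [hj, Function.update_of_ne hj, Function.update_self]
    · intro j hj
      simp only [Finset.mem_filter] at hj
      rw [Function.update_of_ne hj.2.1, tv]
  -- characterization of membership
  have hiff : ∀ x : ℝ, (0 ≤ x ∧
      i ∈ mechWinners (Function.update S i T) (Function.update (tv t S) i x)) ↔ B < x := by
    intro x
    constructor
    · rintro ⟨-, hmem⟩
      rw [mechWinners, Finset.mem_filter] at hmem
      have := hmem.2
      rw [hsum x, Function.update_self] at this
      exact this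
    · intro hx
      have hxpos : 0 < x := lt_of_le_of_lt hBnn hx
      refine ⟨le_of_lt hxpos, ?_⟩
      have hv'i : Function.update (tv t S) i x i = x := Function.update_self i x (tv t S)
      have hS'i : Function.update S i T i = T := Function.update_self i T S
      have hlt : ∀ j, j ≠ i → (Function.update S i T j ∩ Function.update S i T i).Nonempty →
          Function.update (tv t S) i x j < Function.update (tv t S) i x i := by
        intro j hj hint
        rw [hS'i, Function.update_of_ne hj] at hint
        have hjR : j ∈ Rset S i T := by
          rw [Rset, Finset.mem_filter]
          exact ⟨Finset.mem_univ j, hj, hint⟩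
        have hle : t j (S j) ≤ B :=
          Finset.single_le_sum (fun k _ => (ht k).1 (S k)) hjR
        rw [hv'i, Function.update_of_ne hj, tv]
        linarith
      have hgw : i ∈ greedyWinners (Function.update S i T) (Function.update (tv t S) i x) := by
        rw [greedyWinners]
        set v' : Fin n → ℝ := Function.update (tv t S) i x with hv'
        apply greedy_mem_aux
        · -- sortedness of greedyOrder
          rw [greedyOrder]
          have := List.pairwise_mergeSort
            (le := fun a b : Fin n => decide (v' b < v' a ∨ (v' a = v' b ∧ a ≤ b)))
            (fun a b c hab hbc => by
              rw [decide_eq_true_iff] at *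
              rcases hab with h1 | ⟨h1, h1'⟩ <;> rcases hbc with h2 | ⟨h2, h2'⟩
              · exact Or.inl (lt_trans h2 h1)
              · exact Or.inl (h2 ▸ h1)
              · exact Or.inl (h1 ▸ h2)
              · exact Or.inr ⟨h1.trans h2, h1'.trans h2'⟩)
            (fun a b => by
              rcases lt_trichotomy (v' a) (v' b) with h | h | h
              · simp [h]
              · rcases le_total a b with h' | h' <;> simp [h, h']
              · simp [h])
            (List.finRange n)
          refine List.Pairwise.imp ?_ this
          intro a b hab
          rwa [decide_eq_true_iff] at hab
        · rw [greedyOrder, List.mem_mergeSort]; exact List.mem_finRange i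
        · rw [hS'i]; exact hT
        · rw [hv'i]; exact hxpos
        · exact Finset.disjoint_empty_right _
        · exact hlt
      rw [mechWinners, Finset.mem_filter]
      refine ⟨hgw, ?_⟩
      rw [hsum x, hv'i]
      exact hx
  have hset : {x : ℝ | 0 ≤ x ∧
      i ∈ mechWinners (Function.update S i T) (Function.update (tv t S) i x)} = Set.Ioi B := by
    ext x
    simp only [Set.mem_setOf_eq, Set.mem_Ioi]
    exact hiff x
  rw [critPrice, hset, csInf_Ioi]
end

section
/- In the s-CA setting, suppose the truthful single-minded declaration profile d is separated and M_sCA(d) allocates S_i to agent i. For a declaration e of agent i, let W(e) denote the declared social welfare of M_sCA on the profile (e, d_{-i}), that is, W(e) = e(Y_i) + ∑_{j ≠ i} d_j(Y_j) where (Y_1,…,Y_n) is the allocation produced by M_sCA(e, d_{-i}). Then d_i(S_i) − ∑_{j ∈ R_i(d, S_i)} d_j(S_j) ≤ W(d_i) − W(∅) ≤ d_i(S_i), where ∅ denotes the zero declaration. -/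
open Finset

variable {α : Type*} [DecidableEq α] [Fintype α] {n : ℕ}

/-- The declared social welfare of `M_sCA` on the single-minded profile `(S, v)`. -/
noncomputable def declWelfare (S : Fin n → Finset α) (v : Fin n → ℝ) : ℝ :=
  ∑ j ∈ mechWinners S v, v j

section Aux

variable {α : Type*} [DecidableEq α] [Fintype α] {n : ℕ}

private lemma nonempty_of_mem_greedyStep {S : Fin n → Finset α} {v : Fin n → ℝ} :
    ∀ {l : List (Fin n)} {used : Finset α} {j : Fin n},
      j ∈ greedyStep S v l used → (S j).Nonempty := by
  intro l
  induction l with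
  | nil => intro used j h; simp [greedyStep] at h
  | cons a rest ih =>
    intro used j h
    rw [greedyStep] at h
    split at h
    · rcases Finset.mem_insert.mp h with rfl | h
      · exact ‹(S j).Nonempty ∧ 0 < v j ∧ Disjoint (S j) used›.1
      · exact ih h
    · exact ih h

private lemma mem_greedyStep {S : Fin n → Finset α} {v : Fin n → ℝ} {i : Fin n} :
    ∀ {l : List (Fin n)} {used : Finset α},
      List.Pairwise (fun a b => v b < v a ∨ (v a = v b ∧ a ≤ b)) l →
      i ∈ l → Disjoint (S i) used → (S i).Nonempty → 0 < v i →
      (∀ j, j ≠ i → (S j ∩ S i).Nonempty → v j < v i) →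
      i ∈ greedyStep S v l used := by
  intro l
  induction l with
  | nil => intro used _ h; simp at h
  | cons a rest ih =>
    intro used hpw hmem hdisj hne hpos hsmall
    have hpwa := (List.pairwise_cons.mp hpw).1
    have hpwr := (List.pairwise_cons.mp hpw).2
    rw [greedyStep]
    rcases List.mem_cons.mp hmem with rfl | hmem
    · rw [if_pos ⟨hne, hpos, hdisj⟩]
      exact Finset.mem_insert_self _ _
    · split
      · by_cases hia : i = a
        · subst hia; exact Finset.mem_insert_self _ _
        · refine Finset.mem_insert.mpr (Or.inr (ih hpwr hmem ?_ hne hpos hsmall))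
          refine Finset.disjoint_union_right.mpr ⟨hdisj, ?_⟩
          by_contra hnd
          have hint : (S a ∩ S i).Nonempty := by
            rcases Finset.not_disjoint_iff.mp hnd with ⟨x, hx1, hx2⟩
            exact ⟨x, Finset.mem_inter.mpr ⟨hx2, hx1⟩⟩
          have hlt : v a < v i := hsmall a (Ne.symm hia) hint
          rcases hpwa i hmem with h | ⟨h, h'⟩
          · exact absurd hlt (not_lt.mpr h.le)
          · exact absurd hlt (not_lt.mpr h.symm.le)
      · exact ih hpwr hmem hdisj hne hpos hsmall

private lemma greedyOrder_pairwise (v : Fin n → ℝ) :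
    List.Pairwise (fun a b => v b < v a ∨ (v a = v b ∧ a ≤ b)) (greedyOrder n v) := by
  have := List.pairwise_mergeSort
    (le := fun i j : Fin n => decide (v j < v i ∨ (v i = v j ∧ i ≤ j)))
    (fun a b c hab hbc => by
      simp only [decide_eq_true_eq] at *
      rcases hab with h1 | ⟨h1, h1'⟩ <;> rcases hbc with h2 | ⟨h2, h2'⟩
      · exact Or.inl (h2.trans h1)
      · exact Or.inl (h2 ▸ h1)
      · exact Or.inl (h1 ▸ h2)
      · exact Or.inr ⟨h1.trans h2, h1'.trans h2'⟩)
    (fun a b => by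
      simp only [Bool.or_eq_true, decide_eq_true_eq]
      rcases lt_trichotomy (v a) (v b) with h | h | h
      · exact Or.inr (Or.inl h)
      · rcases le_total a b with h' | h'
        · exact Or.inl (Or.inr ⟨h, h'⟩)
        · exact Or.inr (Or.inr ⟨h.symm, h'⟩)
      · exact Or.inl (Or.inl h))
    (List.finRange n)
  simpa [greedyOrder] using this

private lemma mechWinners_eq (S : Fin n → Finset α) (v : Fin n → ℝ) (hv : ∀ j, 0 ≤ v j) :
    mechWinners S v = Finset.univ.filter fun i => (S i).Nonempty ∧
      (∑ j ∈ Finset.univ.filter fun j => j ≠ i ∧ (S j ∩ S i).Nonempty, v j) < v i := by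
  ext i
  simp only [mechWinners, Finset.mem_filter, Finset.mem_univ, true_and]
  constructor
  · rintro ⟨hg, hlt⟩
    exact ⟨nonempty_of_mem_greedyStep hg, hlt⟩
  · rintro ⟨hne, hlt⟩
    have hsum0 : 0 ≤ ∑ j ∈ Finset.univ.filter fun j => j ≠ i ∧ (S j ∩ S i).Nonempty, v j :=
      Finset.sum_nonneg fun k _ => hv k
    have hpos : 0 < v i := lt_of_le_of_lt hsum0 hlt
    refine ⟨?_, hlt⟩
    refine mem_greedyStep (greedyOrder_pairwise v) ?_ (Finset.disjoint_empty_right _)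
      hne hpos ?_
    · simp [greedyOrder, List.mem_mergeSort]
    · intro j hji hint
      have hle : v j ≤ ∑ k ∈ Finset.univ.filter fun k => k ≠ i ∧ (S k ∩ S i).Nonempty, v k :=
        Finset.single_le_sum (fun k _ => hv k) (by simp [hji, hint])
      exact lt_of_le_of_lt hle hlt

end Aux

/-- The Claim in Appendix F: on a separated truthful single-minded profile in which agent `i`
wins `S_i`, the change of declared welfare of `M_sCA` when agent `i`'s bid is replaced by the
zero declaration is between `d_i(S_i) − ∑_{j ∈ R_i(d,S_i)} d_j(S_j)` and `d_i(S_i)`. -/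
theorem stmt14 (s : ℕ) (hs : 1 ≤ s)
    (t : Fin n → Finset α → ℝ) (ht : ∀ i, IsValuation (t i))
    (S : Fin n → Finset α) (hScard : ∀ i, (S i).card ≤ s)
    (hsep : Separated t S)
    (i : Fin n) (hwin : i ∈ mechWinners S (tv t S)) :
    t i (S i) - ∑ j ∈ Rset S i (S i), t j (S j) ≤
        declWelfare S (tv t S) -
          declWelfare (Function.update S i ∅) (Function.update (tv t S) i 0) ∧
      declWelfare S (tv t S) -
          declWelfare (Function.update S i ∅) (Function.update (tv t S) i 0) ≤
        t i (S i) := by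
  classical
  set v : Fin n → ℝ := tv t S with hv_def
  have hv : ∀ j, 0 ≤ v j := fun j => (ht j).1 _
  set S' : Fin n → Finset α := Function.update S i ∅ with hS'_def
  set v' : Fin n → ℝ := Function.update v i 0 with hv'_def
  have hv' : ∀ j, 0 ≤ v' j := by
    intro j
    by_cases h : j = i
    · subst h; simp [hv'_def]
    · simp [hv'_def, Function.update_of_ne h]; exact hv j
  set A : Finset (Fin n) := mechWinners S v with hA_def
  set B : Finset (Fin n) := mechWinners S' v' with hB_def
  have hAeq := mechWinners_eq S v hv
  have hBeq := mechWinners_eq S' v' hv'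
  -- i is not in B
  have hiB : i ∉ B := by
    rw [hB_def, hBeq]
    simp [hS'_def]
  -- for j ≠ i, membership in B simplifies
  have hBmem : ∀ j, j ≠ i → (j ∈ B ↔ (S j).Nonempty ∧
      (∑ k ∈ (Finset.univ.filter fun k => k ≠ j ∧ (S k ∩ S j).Nonempty).erase i, v k) < v j) := by
    intro j hji
    rw [hB_def, hBeq, Finset.mem_filter]
    have hSj : S' j = S j := Function.update_of_ne hji _ _
    have hvj : v' j = v j := Function.update_of_ne hji _ _
    have hset : (Finset.univ.filter fun k => k ≠ j ∧ (S' k ∩ S' j).Nonempty) =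
        (Finset.univ.filter fun k => k ≠ j ∧ (S k ∩ S j).Nonempty).erase i := by
      ext k
      simp only [Finset.mem_erase, Finset.mem_filter, Finset.mem_univ, true_and]
      by_cases hki : k = i
      · subst hki
        simp [hS'_def]
      · rw [hS'_def]
        simp [Function.update_of_ne hki, Function.update_of_ne hji, hki]
    have hsum : (∑ k ∈ Finset.univ.filter fun k => k ≠ j ∧ (S' k ∩ S' j).Nonempty, v' k) =
        ∑ k ∈ (Finset.univ.filter fun k => k ≠ j ∧ (S k ∩ S j).Nonempty).erase i, v k := by
      rw [hset]
      refine Finset.sum_congr rfl fun k hk => ?_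
      exact Function.update_of_ne (Finset.mem_erase.mp hk).1 _ _
    rw [hsum, hSj, hvj]
    simp
  have hAmem : ∀ j, (j ∈ A ↔ (S j).Nonempty ∧
      (∑ k ∈ Finset.univ.filter fun k => k ≠ j ∧ (S k ∩ S j).Nonempty, v k) < v j) := by
    intro j
    rw [hA_def, hAeq, Finset.mem_filter]
    simp
  -- A.erase i ⊆ B
  have hAB : A.erase i ⊆ B := by
    intro j hj
    obtain ⟨hji, hjA⟩ := Finset.mem_erase.mp hj
    obtain ⟨hne, hlt⟩ := (hAmem j).mp hjA
    refine (hBmem j hji).mpr ⟨hne, lt_of_le_of_lt ?_ hlt⟩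
    exact Finset.sum_le_sum_of_subset_of_nonneg (Finset.erase_subset _ _) fun k _ _ => hv k
  -- B \ A ⊆ Rset S i (S i)
  have hBA : B \ A ⊆ Rset S i (S i) := by
    intro j hj
    obtain ⟨hjB, hjA⟩ := Finset.mem_sdiff.mp hj
    have hji : j ≠ i := fun h => hiB (by rwa [h] at hjB)
    obtain ⟨hne, hlt⟩ := (hBmem j hji).mp hjB
    have hiF : i ∈ Finset.univ.filter fun k => k ≠ j ∧ (S k ∩ S j).Nonempty := by
      by_contra hiF
      rw [Finset.erase_eq_of_notMem hiF] at hlt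
      exact hjA ((hAmem j).mpr ⟨hne, hlt⟩)
    obtain ⟨hij, hint⟩ := (Finset.mem_filter.mp hiF).2
    refine Finset.mem_filter.mpr ⟨Finset.mem_univ _, hji, ?_⟩
    rcases hint with ⟨x, hx⟩
    rw [Finset.mem_inter] at hx
    exact ⟨x, Finset.mem_inter.mpr ⟨hx.2, hx.1⟩⟩
  -- welfare computations
  have hW1 : declWelfare S v = v i + ∑ j ∈ A.erase i, v j := by
    rw [declWelfare, ← hA_def, ← Finset.add_sum_erase _ _ hwin]
  have hW2 : declWelfare S' v' = ∑ j ∈ A.erase i, v j + ∑ j ∈ B \ A, v j := by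
    rw [declWelfare, ← hB_def]
    have h1 : (∑ j ∈ B, v' j) = ∑ j ∈ B, v j := by
      refine Finset.sum_congr rfl fun j hj => ?_
      exact Function.update_of_ne (fun h => hiB (by rwa [h] at hj)) _ _
    have h2 : B \ (A.erase i) = B \ A := by
      ext j
      simp only [Finset.mem_sdiff, Finset.mem_erase]
      constructor
      · rintro ⟨hjB, hj⟩
        exact ⟨hjB, fun hjA => hj ⟨fun h => hiB (by rwa [h] at hjB), hjA⟩⟩
      · rintro ⟨hjB, hj⟩
        exact ⟨hjB, fun h => hj h.2⟩
    rw [h1, ← Finset.sum_sdiff hAB, h2, add_comm]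
  have hRsum : ∑ j ∈ B \ A, v j ≤ ∑ j ∈ Rset S i (S i), v j :=
    Finset.sum_le_sum_of_subset_of_nonneg hBA fun k _ _ => hv k
  have hBAnn : 0 ≤ ∑ j ∈ B \ A, v j := Finset.sum_nonneg fun k _ => hv k
  have hvi : v i = t i (S i) := rfl
  have hR : ∀ j ∈ Rset S i (S i), v j = t j (S j) := fun j _ => rfl
  constructor
  · rw [hW1, hW2, hvi]
    have : (∑ j ∈ Rset S i (S i), t j (S j)) = ∑ j ∈ Rset S i (S i), v j :=
      Finset.sum_congr rfl fun j hj => (hR j hj).symm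
    rw [this]
    linarith
  · rw [hW1, hW2, hvi]
    linarith
end
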